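/- (Proposition 1.) There are n ≥ 1 agents. For each agent i, let gⁱ : [0,1] × [0,1] → ℝ be a gross payoff function such that g₂ⁱ(x,t) := ∂gⁱ(x,t)/∂t exists at every (x,t) ∈ [0,1]², g₂ⁱ is bounded and Borel measurable on [0,1]², and preferences are strictly single-crossing: for each t ∈ [0,1], x ↦ g₂ⁱ(x,t) is strictly increasing on [0,1]. Let (X,P) be a direct mechanism assigning to each type profile t ∈ [0,1]ⁿ an outcome Xⁱ(t) ∈ [0,1] and a payment Pⁱ(t) ∈ ℝ for each i, with each Xⁱ(·,t⁻ⁱ) Borel measurable. Then (X,P) is strictly strategy-proof if and only if for each agent i and each profile t⁻ⁱ ∈ [0,1]^{n−1} of the other agents' reports, the map tⁱ ↦ Xⁱ(tⁱ,t⁻ⁱ) is strictly increasing on [0,1] and the envelope formula holds: Pⁱ(tⁱ,t⁻ⁱ) = Pⁱ(0,t⁻ⁱ) − gⁱ(Xⁱ(0,t⁻ⁱ),0) + gⁱ(Xⁱ(tⁱ,t⁻ⁱ),tⁱ) − ∫₀^{tⁱ} g₂ⁱ(Xⁱ(s,t⁻ⁱ),s) ds for all tⁱ ∈ [0,1]. 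-/

import Mathlib

open MeasureTheory Set intervalIntegral Filter Topology

private lemma aux_mem_Icc_of_uIoc {a b u : ℝ} (ha : a ∈ Icc (0:ℝ) 1) (hb : b ∈ Icc (0:ℝ) 1)
    (hu : u ∈ Set.uIoc a b) : u ∈ Icc (0:ℝ) 1 := by
  rw [Set.mem_uIoc] at hu
  rcases hu with ⟨h1, h2⟩ | ⟨h1, h2⟩ <;>
    exact ⟨by linarith [ha.1, hb.1], by linarith [ha.2, hb.2]⟩

/-- A function that is bounded on `[0,1]` and measurable on `[0,1]` (in the restricted sense)
is interval integrable between any two points of `[0,1]`. -/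
private lemma aux_intInt {q : ℝ → ℝ} {M : ℝ}
    (hqm : Measurable ((Icc (0:ℝ) 1).restrict q))
    (hqb : ∀ u ∈ Icc (0:ℝ) 1, |q u| ≤ M)
    {a b : ℝ} (ha : a ∈ Icc (0:ℝ) 1) (hb : b ∈ Icc (0:ℝ) 1) :
    IntervalIntegrable q volume a b := by
  classical
  set q1 : ℝ → ℝ := fun u => if h : u ∈ Icc (0:ℝ) 1 then q u else 0 with hq1def
  have hm1 : Measurable q1 :=
    Measurable.dite (f := fun u : Icc (0:ℝ) 1 => q ↑u) hqm measurable_const measurableSet_Icc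
  have h1 : IntervalIntegrable q1 volume a b := by
    refine (_root_.intervalIntegrable_const (c := max M 0)).mono_fun'
      hm1.aestronglyMeasurable.restrict (ae_of_all _ ?_)
    intro u
    simp only [Real.norm_eq_abs, hq1def]
    split_ifs with h
    · exact le_max_of_le_left (hqb u h)
    · simpa using le_max_right M 0
  refine h1.congr_ae ?_
  refine Filter.eventuallyEq_of_mem (self_mem_ae_restrict measurableSet_uIoc) ?_
  intro u hu
  simp only [hq1def, dif_pos (aux_mem_Icc_of_uIoc ha hb hu)]

/-- Fundamental theorem of calculus for the gross payoff function. -/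
private lemma aux_ftc {g g2 : ℝ → ℝ → ℝ} {x0 : ℝ}
    (hderiv : ∀ y ∈ Icc (0:ℝ) 1, ∀ t ∈ Icc (0:ℝ) 1,
      HasDerivWithinAt (fun s => g y s) (g2 y t) (Icc (0:ℝ) 1) t)
    (hx0 : x0 ∈ Icc (0:ℝ) 1)
    (hint : ∀ a b : ℝ, a ∈ Icc (0:ℝ) 1 → b ∈ Icc (0:ℝ) 1 →
      IntervalIntegrable (fun u => g2 x0 u) volume a b)
    {a b : ℝ} (ha : a ∈ Icc (0:ℝ) 1) (hb : b ∈ Icc (0:ℝ) 1) :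
    ∫ u in a..b, g2 x0 u = g x0 b - g x0 a := by
  have key : ∀ {a b : ℝ}, a ∈ Icc (0:ℝ) 1 → b ∈ Icc (0:ℝ) 1 → a ≤ b →
      ∫ u in a..b, g2 x0 u = g x0 b - g x0 a := by
    intro a b ha hb hab
    refine intervalIntegral.integral_eq_sub_of_hasDeriv_right_of_le hab ?_ ?_ (hint a b ha hb)
    · intro u hu
      exact ((hderiv x0 hx0 u (Icc_subset_Icc ha.1 hb.2 hu)).continuousWithinAt).mono
        (Icc_subset_Icc ha.1 hb.2)
    · intro u hu
      have hu01 : u ∈ Ioo (0:ℝ) 1 := ⟨lt_of_le_of_lt ha.1 hu.1, lt_of_lt_of_le hu.2 hb.2⟩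
      exact (((hderiv x0 hx0 u (Ioo_subset_Icc_self hu01)).hasDerivAt
        (Icc_mem_nhds hu01.1 hu01.2)).hasDerivWithinAt)
  rcases le_total a b with h | h
  · exact key ha hb h
  · rw [intervalIntegral.integral_symm, key hb ha h]; ring

/-- The core one-dimensional characterization. -/
private theorem core_iff {g g2 : ℝ → ℝ → ℝ} {x p : ℝ → ℝ} {M : ℝ}
    (hderiv : ∀ y ∈ Icc (0:ℝ) 1, ∀ t ∈ Icc (0:ℝ) 1,
      HasDerivWithinAt (fun s => g y s) (g2 y t) (Icc (0:ℝ) 1) t)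
    (hM : ∀ y ∈ Icc (0:ℝ) 1, ∀ t ∈ Icc (0:ℝ) 1, |g2 y t| ≤ M)
    (hmeas : Measurable (fun q : Icc (0:ℝ) 1 × Icc (0:ℝ) 1 => g2 q.1 q.2))
    (hscc : ∀ t ∈ Icc (0:ℝ) 1, StrictMonoOn (fun y => g2 y t) (Icc (0:ℝ) 1))
    (hx : ∀ r ∈ Icc (0:ℝ) 1, x r ∈ Icc (0:ℝ) 1)
    (hxmeas : Measurable ((Icc (0:ℝ) 1).restrict x)) :
    (∀ s ∈ Icc (0:ℝ) 1, ∀ r ∈ Icc (0:ℝ) 1, r ≠ s →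
        g (x s) s - p s > g (x r) s - p r)
    ↔ (StrictMonoOn x (Icc (0:ℝ) 1) ∧
        ∀ s ∈ Icc (0:ℝ) 1,
          p s = p 0 - g (x 0) 0 + g (x s) s - ∫ u in (0:ℝ)..s, g2 (x u) u) := by
  have h01 : (0:ℝ) ∈ Icc (0:ℝ) 1 := ⟨le_refl 0, zero_le_one⟩
  have hM0 : 0 ≤ M := (abs_nonneg _).trans (hM 0 h01 0 h01)
  -- interval integrability of u ↦ g2 (x u) u
  have hφint : ∀ a b : ℝ, a ∈ Icc (0:ℝ) 1 → b ∈ Icc (0:ℝ) 1 →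
      IntervalIntegrable (fun u => g2 (x u) u) volume a b := by
    intro a b ha hb
    refine aux_intInt (M := M) ?_ (fun u hu => hM _ (hx u hu) u hu) ha hb
    have hmap : Measurable (fun u : Icc (0:ℝ) 1 =>
        ((⟨x ↑u, hx ↑u u.2⟩ : Icc (0:ℝ) 1), u)) :=
      (hxmeas.subtype_mk).prodMk measurable_id
    exact hmeas.comp hmap
  -- interval integrability of u ↦ g2 y u for fixed y
  have hg2int : ∀ y, y ∈ Icc (0:ℝ) 1 → ∀ a b : ℝ, a ∈ Icc (0:ℝ) 1 → b ∈ Icc (0:ℝ) 1 →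
      IntervalIntegrable (fun u => g2 y u) volume a b := by
    intro y hy a b ha hb
    refine aux_intInt (M := M) ?_ (fun u hu => hM y hy u hu) ha hb
    have hmap : Measurable (fun u : Icc (0:ℝ) 1 => ((⟨y, hy⟩ : Icc (0:ℝ) 1), u)) :=
      measurable_const.prodMk measurable_id
    exact hmeas.comp hmap
  constructor
  · -- strategy-proofness implies monotonicity + envelope
    intro SP
    have key0 : ∀ s ∈ Icc (0:ℝ) 1, ∀ r ∈ Icc (0:ℝ) 1, g (x r) s - p r ≤ g (x s) s - p s := by
      intro s hs r hr
      rcases eq_or_ne r s with rfl | h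
      · exact le_refl _
      · exact (SP s hs r hr h).le
    have hmono : StrictMonoOn x (Icc (0:ℝ) 1) := by
      intro r hr s hs hrs
      by_contra hle
      push_neg at hle
      have h1 := SP s hs r hr (ne_of_lt hrs)
      have h2 := SP r hr s hs (ne_of_gt hrs)
      have hanti : AntitoneOn (fun u => g (x s) u - g (x r) u) (Icc (0:ℝ) 1) := by
        apply antitoneOn_of_deriv_nonpos (convex_Icc 0 1)
        · exact ContinuousOn.sub (fun u hu => (hderiv _ (hx s hs) u hu).continuousWithinAt)
            (fun u hu => (hderiv _ (hx r hr) u hu).continuousWithinAt)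
        · intro u hu
          rw [interior_Icc] at hu
          have hd := ((hderiv _ (hx s hs) u (Ioo_subset_Icc_self hu)).hasDerivAt
              (Icc_mem_nhds hu.1 hu.2)).sub
            ((hderiv _ (hx r hr) u (Ioo_subset_Icc_self hu)).hasDerivAt
              (Icc_mem_nhds hu.1 hu.2))
          exact hd.differentiableAt.differentiableWithinAt
        · intro u hu
          rw [interior_Icc] at hu
          have hd := ((hderiv _ (hx s hs) u (Ioo_subset_Icc_self hu)).hasDerivAt
              (Icc_mem_nhds hu.1 hu.2)).sub
            ((hderiv _ (hx r hr) u (Ioo_subset_Icc_self hu)).hasDerivAt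
              (Icc_mem_nhds hu.1 hu.2))
          rw [show deriv (fun u => g (x s) u - g (x r) u) u = _ from hd.deriv]
          have : g2 (x s) u ≤ g2 (x r) u :=
            (hscc u (Ioo_subset_Icc_self hu)).monotoneOn (hx s hs) (hx r hr) hle
          linarith
      have := hanti hr hs hrs.le
      simp only at this
      linarith
    refine ⟨hmono, ?_⟩
    -- the envelope formula
    set V : ℝ → ℝ := fun u => g (x u) u - p u with hV
    have hVmem : ∀ u v, u ∈ Icc (0:ℝ) 1 → v ∈ Icc (0:ℝ) 1 →
        g (x u) v - g (x u) u ≤ V v - V u := by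
      intro u v hu hv
      have := key0 v hv u hu
      simp only [hV]
      linarith
    have hlip0 : ∀ y ∈ Icc (0:ℝ) 1, ∀ u ∈ Icc (0:ℝ) 1, ∀ v ∈ Icc (0:ℝ) 1,
        |g y v - g y u| ≤ M * |v - u| := by
      intro y hy u hu v hv
      have := Convex.norm_image_sub_le_of_norm_hasDerivWithin_le
        (f := fun s => g y s) (f' := fun t => g2 y t) (s := Icc (0:ℝ) 1)
        (fun t ht => hderiv y hy t ht)
        (fun t ht => by simpa [Real.norm_eq_abs] using hM y hy t ht)
        (convex_Icc 0 1) hu hv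
      simpa [Real.norm_eq_abs] using this
    have key1 : ∀ a b, a ∈ Icc (0:ℝ) 1 → b ∈ Icc (0:ℝ) 1 → V b - V a ≤ M * |b - a| := by
      intro a b ha hb
      have h1 := hVmem b a hb ha
      calc V b - V a ≤ g (x b) b - g (x b) a := by linarith
        _ ≤ |g (x b) b - g (x b) a| := le_abs_self _
        _ ≤ M * |b - a| := hlip0 (x b) (hx b hb) a ha b hb
    have hVlip : LipschitzOnWith M.toNNReal V (Icc (0:ℝ) 1) := by
      rw [lipschitzOnWith_iff_dist_le_mul]
      intro u hu v hv
      rw [Real.dist_eq, Real.dist_eq, Real.coe_toNNReal M hM0, abs_sub_le_iff]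
      constructor
      · exact key1 v u hv hu
      · exact (key1 u v hu hv).trans (le_of_eq (by rw [abs_sub_comm]))
    set Vt : ℝ → ℝ := fun u => V ↑(projIcc (0:ℝ) 1 zero_le_one u) with hVtdef
    have hVteq : ∀ u ∈ Icc (0:ℝ) 1, Vt u = V u := by
      intro u hu
      simp only [hVtdef, projIcc_of_mem zero_le_one hu]
    have hVtlip : LipschitzWith M.toNNReal Vt := by
      have h := (hVlip.to_restrict).comp (LipschitzWith.projIcc (zero_le_one))
      rwa [mul_one] at h
    have hVtdist : ∀ u v : ℝ, |Vt u - Vt v| ≤ M * |u - v| := by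
      intro u v
      have := hVtlip.dist_le_mul u v
      rwa [Real.dist_eq, Real.dist_eq, Real.coe_toNNReal M hM0] at this
    have hVtcont : Continuous Vt := hVtlip.continuous
    have hae1 : ∀ᵐ u : ℝ, DifferentiableAt ℝ Vt u :=
      hVtlip.ae_differentiableAt (μ := volume)
    -- at interior points where Vt is differentiable, its derivative is g2 (x u) u
    have hDeriv : ∀ u ∈ Ioo (0:ℝ) 1, DifferentiableAt ℝ Vt u →
        HasDerivAt Vt (g2 (x u) u) u := by
      intro u hu hdiff
      have hu' : u ∈ Icc (0:ℝ) 1 := Ioo_subset_Icc_self hu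
      have hd : HasDerivAt Vt (deriv Vt u) u := hdiff.hasDerivAt
      have hslopeV : Tendsto (slope Vt u) (𝓝[≠] u) (𝓝 (deriv Vt u)) :=
        hasDerivAt_iff_tendsto_slope.1 hd
      have hslopeg : Tendsto (slope (fun s => g (x u) s) u) (𝓝[Icc (0:ℝ) 1 \ {u}] u)
          (𝓝 (g2 (x u) u)) :=
        hasDerivWithinAt_iff_tendsto_slope.1 (hderiv (x u) (hx u hu') u hu')
      have hnum : ∀ v ∈ Icc (0:ℝ) 1, g (x u) v - g (x u) u ≤ Vt v - Vt u := by
        intro v hv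
        rw [hVteq v hv, hVteq u hu']
        exact hVmem u v hu' hv
      have hub : g2 (x u) u ≤ deriv Vt u := by
        haveI hne : (𝓝[Ioc u 1] u).NeBot := by
          rw [nhdsWithin_Ioc_eq_nhdsGT hu.2]; infer_instance
        have t1 : Tendsto (slope (fun s => g (x u) s) u) (𝓝[Ioc u 1] u) (𝓝 (g2 (x u) u)) :=
          hslopeg.mono_left (nhdsWithin_mono u (fun v hv =>
            ⟨⟨(hu.1.trans hv.1).le, hv.2⟩, (ne_of_gt hv.1)⟩))
        have t2 : Tendsto (slope Vt u) (𝓝[Ioc u 1] u) (𝓝 (deriv Vt u)) :=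
          hslopeV.mono_left (nhdsWithin_mono u (fun v hv => ne_of_gt hv.1))
        refine le_of_tendsto_of_tendsto t1 t2 ?_
        · filter_upwards [self_mem_nhdsWithin] with v hv
          have hvpos : 0 < v - u := sub_pos.2 hv.1
          have hvIcc : v ∈ Icc (0:ℝ) 1 := ⟨(hu.1.trans hv.1).le, hv.2⟩
          rw [slope_def_field, slope_def_field]
          exact (div_le_div_iff_of_pos_right hvpos).2 (hnum v hvIcc)
      have hlb : deriv Vt u ≤ g2 (x u) u := by
        haveI hne : (𝓝[Ico 0 u] u).NeBot := by
          rw [nhdsWithin_Ico_eq_nhdsLT hu.1]; infer_instance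
        have t1 : Tendsto (slope Vt u) (𝓝[Ico 0 u] u) (𝓝 (deriv Vt u)) :=
          hslopeV.mono_left (nhdsWithin_mono u (fun v hv => ne_of_lt hv.2))
        have t2 : Tendsto (slope (fun s => g (x u) s) u) (𝓝[Ico 0 u] u) (𝓝 (g2 (x u) u)) :=
          hslopeg.mono_left (nhdsWithin_mono u (fun v hv =>
            ⟨⟨hv.1, (hv.2.trans hu.2).le⟩, ne_of_lt hv.2⟩))
        refine le_of_tendsto_of_tendsto t1 t2 ?_
        · filter_upwards [self_mem_nhdsWithin] with v hv
          have hvneg : v - u < 0 := sub_neg.2 hv.2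
          have hvIcc : v ∈ Icc (0:ℝ) 1 := ⟨hv.1, (hv.2.trans hu.2).le⟩
          rw [slope_def_field, slope_def_field, div_eq_mul_inv, div_eq_mul_inv]
          exact mul_le_mul_of_nonpos_right (hnum v hvIcc) (inv_nonpos.2 hvneg.le)
      have : deriv Vt u = g2 (x u) u := le_antisymm hlb hub
      rw [← this]
      exact hd
    -- the sequence of difference quotients
    intro s hs
    have hc0 : Tendsto (fun k : ℕ => 1 / ((k:ℝ) + 1)) atTop (𝓝 0) :=
      tendsto_one_div_add_atTop_nhds_zero_nat
    have hcpos : ∀ k : ℕ, 0 < 1 / ((k:ℝ) + 1) := by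
      intro k; positivity
    have hseq : ∀ (f : ℝ → ℝ) (u d : ℝ), HasDerivAt f d u →
        Tendsto (fun k : ℕ => (f (u + 1 / ((k:ℝ) + 1)) - f u) / (1 / ((k:ℝ) + 1)))
          atTop (𝓝 d) := by
      intro f u d hd
      have h1 : Tendsto (fun k : ℕ => u + 1 / ((k:ℝ) + 1)) atTop (𝓝[≠] u) := by
        apply tendsto_nhdsWithin_of_tendsto_nhds_of_eventually_within
        · simpa using tendsto_const_nhds.add hc0
        · exact Eventually.of_forall (fun k => by
            simp only [Set.mem_compl_iff, Set.mem_singleton_iff]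
            have := hcpos k
            intro h
            nlinarith)
      have h2 := (hasDerivAt_iff_tendsto_slope.1 hd).comp h1
      refine h2.congr (fun k => ?_)
      simp [slope_def_field]
    have hVtInt : ∀ a b : ℝ, IntervalIntegrable Vt volume a b :=
      fun a b => hVtcont.intervalIntegrable a b
    have hFd : ∀ y : ℝ, HasDerivAt (fun z => ∫ u in (0:ℝ)..z, Vt u) (Vt y) y := by
      intro y
      exact intervalIntegral.integral_hasDerivAt_right (hVtInt 0 y)
        (hVtcont.stronglyMeasurable.stronglyMeasurableAtFilter)
        hVtcont.continuousAt
    set F : ℝ → ℝ := fun z => ∫ u in (0:ℝ)..z, Vt u with hFdef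
    have hlim1 : Tendsto (fun k : ℕ => (F (s + 1 / ((k:ℝ) + 1)) - F s) / (1 / ((k:ℝ) + 1)))
        atTop (𝓝 (Vt s)) := hseq F s (Vt s) (hFd s)
    have hlim2 : Tendsto (fun k : ℕ => (F (1 / ((k:ℝ) + 1)) - F 0) / (1 / ((k:ℝ) + 1)))
        atTop (𝓝 (Vt 0)) := by
      have := hseq F 0 (Vt 0) (hFd 0)
      simpa using this
    have hIdent : ∀ k : ℕ,
        ∫ u in (0:ℝ)..s, (Vt (u + 1 / ((k:ℝ) + 1)) - Vt u) / (1 / ((k:ℝ) + 1))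
          = ((F (s + 1 / ((k:ℝ) + 1)) - F s) - (F (1 / ((k:ℝ) + 1)) - F 0)) / (1 / ((k:ℝ) + 1)) := by
      intro k
      set c : ℝ := 1 / ((k:ℝ) + 1) with hcdef
      have hVtc : Continuous fun u : ℝ => Vt (u + c) :=
        hVtcont.comp (continuous_id.add continuous_const)
      have e1 : ∫ u in (0:ℝ)..s, Vt (u + c) = ∫ u in c..(s + c), Vt u := by
        have := intervalIntegral.integral_comp_add_right (a := (0:ℝ)) (b := s) (f := Vt) c
        simpa using this
      have e2 : ∫ u in (0:ℝ)..s, (Vt (u + c) - Vt u) / c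
          = ((∫ u in c..(s + c), Vt u) - ∫ u in (0:ℝ)..s, Vt u) / c := by
        rw [intervalIntegral.integral_div,
          intervalIntegral.integral_sub (hVtc.intervalIntegrable 0 s) (hVtInt 0 s), e1]
      rw [e2]
      have a1 : F c + ∫ u in c..(s + c), Vt u = F (s + c) :=
        intervalIntegral.integral_add_adjacent_intervals (hVtInt 0 c) (hVtInt c (s + c))
      have a0 : F 0 = 0 := intervalIntegral.integral_same
      have hFs : F s = ∫ u in (0:ℝ)..s, Vt u := rfl
      congr 1
      linarith [a1]
    have hlimA : Tendsto
        (fun k : ℕ => ∫ u in (0:ℝ)..s, (Vt (u + 1 / ((k:ℝ) + 1)) - Vt u) / (1 / ((k:ℝ) + 1)))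
        atTop (𝓝 (Vt s - Vt 0)) := by
      have h := hlim1.sub hlim2
      refine Tendsto.congr (fun k => ?_) h
      rw [hIdent k]
      ring
    have hne1 : ∀ᵐ u : ℝ, u ≠ (1:ℝ) := by
      refine (MeasureTheory.ae_iff).2 ?_
      have : {u : ℝ | ¬ u ≠ 1} = {1} := by ext u; simp
      rw [this]
      exact measure_singleton 1
    have hlimB : Tendsto
        (fun k : ℕ => ∫ u in (0:ℝ)..s, (Vt (u + 1 / ((k:ℝ) + 1)) - Vt u) / (1 / ((k:ℝ) + 1)))
        atTop (𝓝 (∫ u in (0:ℝ)..s, g2 (x u) u)) := by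
      refine intervalIntegral.tendsto_integral_filter_of_dominated_convergence (fun _ => M)
        (Eventually.of_forall fun k => ?_) (Eventually.of_forall fun k => ?_) ?_ ?_
      · exact (((hVtcont.comp (continuous_id.add continuous_const)).sub hVtcont).div_const
          _).aestronglyMeasurable.restrict
      · refine ae_of_all _ fun u _ => ?_
        rw [Real.norm_eq_abs, abs_div, abs_of_pos (hcpos k)]
        have hd := hVtdist (u + 1 / ((k:ℝ) + 1)) u
        have : |u + 1 / ((k:ℝ) + 1) - u| = 1 / ((k:ℝ) + 1) := by
          rw [add_sub_cancel_left, abs_of_pos (hcpos k)]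
        rw [this] at hd
        calc |Vt (u + 1 / ((k:ℝ) + 1)) - Vt u| / (1 / ((k:ℝ) + 1))
            ≤ (M * (1 / ((k:ℝ) + 1))) / (1 / ((k:ℝ) + 1)) := by
              exact (div_le_div_iff_of_pos_right (hcpos k)).2 hd
          _ = M := by field_simp
      · exact intervalIntegrable_const
      · filter_upwards [hae1, hne1] with u hdiff hne hu
        have hu' : u ∈ Ioo (0:ℝ) 1 := by
          rw [Set.uIoc_of_le hs.1] at hu
          exact ⟨hu.1, lt_of_le_of_ne (hu.2.trans hs.2) hne⟩
        exact hseq Vt u _ (hDeriv u hu' hdiff)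
    have hkey : Vt s - Vt 0 = ∫ u in (0:ℝ)..s, g2 (x u) u :=
      tendsto_nhds_unique hlimA hlimB
    rw [hVteq s hs, hVteq 0 h01] at hkey
    simp only [hV] at hkey
    linarith
  · -- monotonicity + envelope implies strategy-proofness
    rintro ⟨hmono, henv⟩ s hs r hr hne
    have hxr := hx r hr
    have hxs := hx s hs
    have e1 : p s - p r = g (x s) s - g (x r) r - ∫ u in r..s, g2 (x u) u := by
      have h1 := henv s hs
      have h2 := henv r hr
      have hadd : (∫ u in (0:ℝ)..r, g2 (x u) u) + ∫ u in r..s, g2 (x u) u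
          = ∫ u in (0:ℝ)..s, g2 (x u) u :=
        intervalIntegral.integral_add_adjacent_intervals (hφint 0 r h01 hr) (hφint r s hr hs)
      linarith
    have e2 : ∫ u in r..s, g2 (x r) u = g (x r) s - g (x r) r :=
      aux_ftc hderiv hxr (hg2int (x r) hxr) hr hs
    have e3 : ∫ u in r..s, (g2 (x u) u - g2 (x r) u)
        = (∫ u in r..s, g2 (x u) u) - ∫ u in r..s, g2 (x r) u :=
      intervalIntegral.integral_sub (hφint r s hr hs) (hg2int (x r) hxr r s hr hs)
    have hpos : 0 < ∫ u in r..s, (g2 (x u) u - g2 (x r) u) := by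
      rcases hne.lt_or_gt with h | h
      · refine intervalIntegral.intervalIntegral_pos_of_pos_on
          ((hφint r s hr hs).sub (hg2int (x r) hxr r s hr hs)) ?_ h
        intro u hu
        have hu' : u ∈ Icc (0:ℝ) 1 := ⟨hr.1.trans hu.1.le, hu.2.le.trans hs.2⟩
        have hxlt : x r < x u := hmono hr hu' hu.1
        exact sub_pos.2 (hscc u hu' hxr (hx u hu') hxlt)
      · have hpos' : 0 < ∫ u in s..r, (g2 (x r) u - g2 (x u) u) := by
          refine intervalIntegral.intervalIntegral_pos_of_pos_on
            ((hg2int (x r) hxr s r hs hr).sub (hφint s r hs hr)) ?_ h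
          intro u hu
          have hu' : u ∈ Icc (0:ℝ) 1 := ⟨hs.1.trans hu.1.le, hu.2.le.trans hr.2⟩
          have hxlt : x u < x r := hmono hu' hr hu.2
          exact sub_pos.2 (hscc u hu' (hx u hu') hxr hxlt)
        have hsymm : ∫ u in r..s, (g2 (x u) u - g2 (x r) u)
            = ∫ u in s..r, (g2 (x r) u - g2 (x u) u) := by
          rw [intervalIntegral.integral_symm]
          rw [← intervalIntegral.integral_neg]
          congr 1
          ext u
          ring
        rw [hsymm]
        exact hpos'
    rw [e3, e2] at hpos
    linarith [e1]

/-- Proposition 1: with strictly single-crossing preferences, a direct mechanism for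
`n` agents is strictly strategy-proof iff, for each agent `i` and each profile of the
other agents' reports, agent `i`'s allocation is strictly increasing in her own report
and the envelope formula holds. -/
theorem strictly_strategy_proof_iff_strict_mono_and_envelope
    (n : ℕ) (hn : 1 ≤ n)
    (g g2 : Fin n → ℝ → ℝ → ℝ)
    (X P : Fin n → (Fin n → ℝ) → ℝ)
    (hderiv : ∀ i, ∀ x ∈ Icc (0:ℝ) 1, ∀ t ∈ Icc (0:ℝ) 1,
      HasDerivWithinAt (fun s => g i x s) (g2 i x t) (Icc (0:ℝ) 1) t)
    (hbdd : ∀ i, ∃ M : ℝ, ∀ x ∈ Icc (0:ℝ) 1, ∀ t ∈ Icc (0:ℝ) 1, |g2 i x t| ≤ M)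
    (hmeas : ∀ i, Measurable (fun p : Icc (0:ℝ) 1 × Icc (0:ℝ) 1 => g2 i p.1 p.2))
    (hscc : ∀ i, ∀ t ∈ Icc (0:ℝ) 1, StrictMonoOn (fun x => g2 i x t) (Icc (0:ℝ) 1))
    (hX : ∀ i t, (∀ j, t j ∈ Icc (0:ℝ) 1) → X i t ∈ Icc (0:ℝ) 1)
    (hXmeas : ∀ i (t : Fin n → ℝ), (∀ j, t j ∈ Icc (0:ℝ) 1) →
      Measurable ((Icc (0:ℝ) 1).restrict (fun r => X i (Function.update t i r)))) :
    -- strict strategy-proofness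
    (∀ i, ∀ t : Fin n → ℝ, (∀ j, t j ∈ Icc (0:ℝ) 1) → ∀ r ∈ Icc (0:ℝ) 1, r ≠ t i →
      g i (X i t) (t i) - P i t
        > g i (X i (Function.update t i r)) (t i) - P i (Function.update t i r))
    ↔
    -- strict monotonicity plus the envelope formula, for each i and t⁻ⁱ
    (∀ i, ∀ t : Fin n → ℝ, (∀ j, t j ∈ Icc (0:ℝ) 1) →
      (StrictMonoOn (fun r => X i (Function.update t i r)) (Icc (0:ℝ) 1) ∧
       ∀ s ∈ Icc (0:ℝ) 1,
         P i (Function.update t i s)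
           = P i (Function.update t i 0)
             - g i (X i (Function.update t i 0)) 0
             + g i (X i (Function.update t i s)) s
             - ∫ u in (0:ℝ)..s, g2 i (X i (Function.update t i u)) u)) := by
  constructor
  · intro SP i t ht
    obtain ⟨M, hM⟩ := hbdd i
    have hupd : ∀ r ∈ Icc (0:ℝ) 1, ∀ j, Function.update t i r j ∈ Icc (0:ℝ) 1 := by
      intro r hr j
      rcases eq_or_ne j i with rfl | hj
      · simpa using hr
      · simpa [Function.update_of_ne hj] using ht j
    have SP' : ∀ s ∈ Icc (0:ℝ) 1, ∀ r ∈ Icc (0:ℝ) 1, r ≠ s →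
        g i (X i (Function.update t i s)) s - P i (Function.update t i s)
          > g i (X i (Function.update t i r)) s - P i (Function.update t i r) := by
      intro s hs r hr hne
      have h := SP i (Function.update t i s) (hupd s hs) r hr
        (by rw [Function.update_self]; exact hne)
      simpa [Function.update_idem, Function.update_self] using h
    exact (core_iff (hderiv i) hM (hmeas i) (hscc i)
      (fun r hr => hX i _ (hupd r hr)) (hXmeas i t ht)).1 SP'
  · intro H i t ht r hr hne
    obtain ⟨M, hM⟩ := hbdd i
    have hupd : ∀ r ∈ Icc (0:ℝ) 1, ∀ j, Function.update t i r j ∈ Icc (0:ℝ) 1 := by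
      intro r hr j
      rcases eq_or_ne j i with rfl | hj
      · simpa using hr
      · simpa [Function.update_of_ne hj] using ht j
    obtain ⟨hmono, henv⟩ := H i t ht
    have h := (core_iff (p := fun r => P i (Function.update t i r)) (hderiv i) hM (hmeas i)
      (hscc i) (fun r hr => hX i _ (hupd r hr)) (hXmeas i t ht)).2
      ⟨hmono, henv⟩ (t i) (ht i) r hr hne
    simpa [Function.update_eq_self] using h
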